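/- arXiv:1904.03741 — 7 statements merged into one kernel-verified Lean document; each statement's English description precedes it below -/
import Mathlib

section
/- Let G and H be finite simple graphs such that H contains a t-clique as a subgraph and H is properly t-colorable. Then G contains a t-clique if and only if the tensor product of H and G contains a (not necessarily induced) subgraph isomorphic to H. -/
/-!
A homomorphism `φ : H →g G` yields the copy `u ↦ (u, φ u)` of `H` in `H × G`, and conversely any
copy of `H` in `H × G` followed by the second projection is a homomorphism `H →g G`; so `H` lies
in `H × G` iff `H` maps homomorphically to `G`. When `H` contains `K_t` and is `t`-colourable,
`H` and `K_t` map homomorphically to each other, so `H →g G` exists iff `K_t →g G` does, i.e.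
iff `G` has a `t`-clique (homomorphisms out of a complete graph are injective).
-/

/-- The tensor (categorical) product of `H` and `G`: vertices are pairs,
with an edge iff both coordinates are adjacent. -/
def SimpleGraph.tensorProd {α β : Type*} (H : SimpleGraph α) (G : SimpleGraph β) :
    SimpleGraph (α × β) where
  Adj p q := H.Adj p.1 q.1 ∧ G.Adj p.2 q.2
  symm := ⟨fun _ _ h => ⟨h.1.symm, h.2.symm⟩⟩
  loopless := ⟨fun p h => H.loopless.irrefl p.1 h.1⟩

namespace SimpleGraph

variable {α β γ : Type*} {A : SimpleGraph α} {B : SimpleGraph β}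

theorem isContained_iff_exists_injective_adj :
    A ⊑ B ↔ ∃ f : α → β, Function.Injective f ∧ ∀ u w, A.Adj u w → B.Adj (f u) (f w) :=
  ⟨fun ⟨f⟩ => ⟨f, f.injective, fun _ _ h => f.toHom.map_adj h⟩,
    fun ⟨f, hf, hadj⟩ => ⟨⟨⟨f, hadj _ _⟩, hf⟩⟩⟩

theorem exists_isNClique_iff_top_isContained {n : ℕ} :
    (∃ s : Finset α, A.IsNClique n s) ↔ completeGraph (Fin n) ⊑ A := by
  rw [← not_cliqueFree_iff_top_isContained, CliqueFree]
  push Not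
  rfl

theorem top_isContained_iff_nonempty_hom :
    completeGraph γ ⊑ A ↔ Nonempty (completeGraph γ →g A) :=
  ⟨fun ⟨f⟩ => ⟨f.toHom⟩, fun ⟨f⟩ => ⟨f.toCopy f.injective_of_top_hom⟩⟩

theorem nonempty_hom_congr_left {K : SimpleGraph γ} (f : K →g A) (g : A →g K) :
    Nonempty (A →g B) ↔ Nonempty (K →g B) :=
  ⟨fun ⟨φ⟩ => ⟨φ.comp f⟩, fun ⟨φ⟩ => ⟨φ.comp g⟩⟩

namespace tensorProd

def snd : A.tensorProd B →g B where
  toFun p := p.2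
  map_rel' h := h.2

def graphCopy (φ : A →g B) : Copy A (A.tensorProd B) where
  toHom := { toFun u := (u, φ u), map_rel' h := ⟨h, φ.map_adj h⟩ }
  injective' _ _ h := congrArg Prod.fst h

end tensorProd

theorem isContained_tensorProd_self_iff_nonempty_hom :
    A ⊑ A.tensorProd B ↔ Nonempty (A →g B) :=
  ⟨fun ⟨f⟩ => ⟨tensorProd.snd.comp f.toHom⟩, fun ⟨φ⟩ => ⟨tensorProd.graphCopy φ⟩⟩

end SimpleGraph

theorem clique_iff_tensor_contains_H {α β : Type*} (H : SimpleGraph α) (G : SimpleGraph β)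
    (t : ℕ) (hHclique : ∃ sH : Finset α, H.IsNClique t sH)
    (hHcol : Nonempty (H.Coloring (Fin t))) :
    (∃ sG : Finset β, G.IsNClique t sG) ↔
      ∃ f : α → α × β, Function.Injective f ∧
        ∀ u w : α, H.Adj u w → (H.tensorProd G).Adj (f u) (f w) := by
  obtain ⟨K_t⟩ := SimpleGraph.exists_isNClique_iff_top_isContained.mp hHclique
  obtain ⟨c⟩ := hHcol
  rw [← SimpleGraph.isContained_iff_exists_injective_adj,
    SimpleGraph.isContained_tensorProd_self_iff_nonempty_hom,
    SimpleGraph.nonempty_hom_congr_left K_t.toHom c,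
    ← SimpleGraph.top_isContained_iff_nonempty_hom,
    SimpleGraph.exists_isNClique_iff_top_isContained]
end

section
/- Let q ≥ 2 be an integer and let G and H be finite simple graphs such that G contains at least one induced copy of H. If G' is the random induced subgraph of G obtained by keeping each vertex independently with probability 1/2, then the probability that the number of induced copies of H in G' is not a multiple of q is at least 2^(−|V(H)|). -/
/-!
Fix an induced copy `T` of `H`. Every copy has `|V(H)|` vertices, so `T` is the only copy
containing `T`. For `A ⊆ V(G) \ T` write `N(A ∪ B)` for the number of copies inside `A ∪ B`;
inclusion–exclusion over `B ⊆ T` gives `∑_{B ⊆ T} (-1)^|B| N(A ∪ B) = ±1`, so some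
`N(A ∪ B_A)` is not divisible by `q`. Distinct `A` give distinct sets `A ∪ B_A`
(remove `T` to recover `A`), hence at least `2^(|V(G)| - |V(H)|)` bad vertex sets.
-/

open Classical in
/-- The number of induced copies of `H` among the vertices in `S`:
subsets of `S` whose induced subgraph is isomorphic to `H`. -/
noncomputable def inducedCopies {V W : Type*} [Fintype V] [DecidableEq V]
    (G : SimpleGraph V) (H : SimpleGraph W) (S : Finset V) : ℕ :=
  (S.powerset.filter fun s => Nonempty ((G.induce (s : Set V)) ≃g H)).card

open Finset

section
variable {α : Type*} [DecidableEq α]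

theorem sum_Icc_neg_one_pow_card {C T : Finset α} (h : C ⊆ T) :
    ∑ B ∈ Icc C T, (-1 : ℤ) ^ #B = if C = T then (-1) ^ #T else 0 := by
  have hdisj : ∀ D ∈ (T \ C).powerset, Disjoint C D := fun D hD =>
    disjoint_sdiff.mono_right (mem_powerset.1 hD)
  rw [Icc_eq_image_powerset h, sum_image fun D hD D' hD' hDD' => by
      rw [← union_sdiff_cancel_left (hdisj D hD), hDD', union_sdiff_cancel_left (hdisj D' hD')]]
  rw [sum_congr rfl fun D hD => by rw [card_union_of_disjoint (hdisj D hD), pow_add],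
    ← mul_sum, sum_powerset_neg_one_pow_card]
  by_cases hCT : C = T
  · simp [hCT]
  · simp [hCT, sdiff_eq_empty_iff_subset, (ssubset_of_subset_of_ne h hCT).not_subset]

theorem sum_powerset_neg_one_pow_card_mul_card_filter_inter_subset
    (𝒮 : Finset (Finset α)) (T : Finset α) :
    ∑ B ∈ T.powerset, (-1 : ℤ) ^ #B * #{s ∈ 𝒮 | s ∩ T ⊆ B} =
      (-1) ^ #T * #{s ∈ 𝒮 | T ⊆ s} := by
  have hIcc : ∀ s : Finset α, {B ∈ T.powerset | s ∩ T ⊆ B} = Icc (s ∩ T) T := fun s => by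
    ext B; simp [and_comm]
  simp only [natCast_card_filter, mul_sum, mul_ite, mul_one, mul_zero]
  rw [sum_comm]
  refine sum_congr rfl fun s _ => ?_
  rw [← sum_filter, hIcc, sum_Icc_neg_one_pow_card inter_subset_right]
  simp only [inter_eq_right]

theorem filter_powerset_union_eq_filter_inter_subset
    (P : Finset α → Prop) [DecidablePred P]
    {A B T : Finset α} (hAT : Disjoint A T) (hBT : B ⊆ T) :
    {s ∈ (A ∪ B).powerset | P s} =
      {s ∈ {s ∈ (A ∪ T).powerset | P s} | s ∩ T ⊆ B} := by
  ext s
  simp only [mem_filter, mem_powerset]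
  constructor
  · rintro ⟨hs, hP⟩
    refine ⟨⟨hs.trans (union_subset_union_right hBT), hP⟩, fun x hx => ?_⟩
    obtain ⟨hxs, hxT⟩ := mem_inter.1 hx
    exact (mem_union.1 (hs hxs)).resolve_left fun hxA => disjoint_left.1 hAT hxA hxT
  · rintro ⟨⟨hs, hP⟩, hsB⟩
    refine ⟨fun x hxs => ?_, hP⟩
    rcases mem_union.1 (hs hxs) with hxA | hxT
    · exact mem_union_left _ hxA
    · exact mem_union_right _ (hsB (mem_inter.2 ⟨hxs, hxT⟩))

theorem exists_subset_not_dvd_card_filter_powerset_union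
    (P : Finset α → Prop) [DecidablePred P]
    {T : Finset α} (hT : P T) (hmax : ∀ s, P s → T ⊆ s → s = T) {q : ℕ} (hq : q ≠ 1)
    {A : Finset α} (hAT : Disjoint A T) :
    ∃ B ⊆ T, ¬ q ∣ #{s ∈ (A ∪ B).powerset | P s} := by
  by_contra! hdvd
  set 𝒮 := {s ∈ (A ∪ T).powerset | P s}
  have hfiber : {s ∈ 𝒮 | T ⊆ s} = {T} := by
    ext s
    simp only [𝒮, mem_filter, mem_powerset, mem_singleton]
    exact ⟨fun ⟨⟨_, hP⟩, hTs⟩ => hmax s hP hTs,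
      by rintro rfl; exact ⟨⟨subset_union_right, hT⟩, subset_rfl⟩⟩
  have hsum := sum_powerset_neg_one_pow_card_mul_card_filter_inter_subset 𝒮 T
  rw [hfiber, card_singleton, Nat.cast_one, mul_one] at hsum
  have : (q : ℤ) ∣ (-1) ^ #T := hsum ▸ dvd_sum fun B hB => by
    rw [← filter_powerset_union_eq_filter_inter_subset P hAT (mem_powerset.1 hB)]
    exact dvd_mul_of_dvd_right (Int.natCast_dvd_natCast.2 (hdvd B (mem_powerset.1 hB))) _
  exact hq (Int.natAbs_dvd_natAbs.2 this |>.trans (by simp) |> Nat.dvd_one.1)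

theorem two_pow_card_sub_le_card_filter_not_dvd [Fintype α]
    (P : Finset α → Prop) [DecidablePred P]
    {T : Finset α} (hT : P T) (hmax : ∀ s, P s → T ⊆ s → s = T) {q : ℕ} (hq : q ≠ 1) :
    2 ^ (Fintype.card α - #T) ≤ #{S : Finset α | ¬ q ∣ #{s ∈ S.powerset | P s}} := by
  choose! B hBT hB using fun A (hA : A ∈ Tᶜ.powerset) =>
    exists_subset_not_dvd_card_filter_powerset_union P hT hmax hq
      (subset_compl_iff_disjoint_right.1 (mem_powerset.1 hA))
  have hrecover : ∀ A ∈ Tᶜ.powerset, (A ∪ B A) \ T = A := fun A hA => by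
    rw [union_sdiff_distrib, sdiff_eq_empty_iff_subset.2 (hBT A hA), union_empty,
      sdiff_eq_self_of_disjoint (subset_compl_iff_disjoint_right.1 (mem_powerset.1 hA))]
  rw [← card_compl, ← card_powerset]
  refine card_le_card_of_injOn (fun A => A ∪ B A) (fun A hA => ?_) fun A hA A' hA' h => ?_
  · simpa using hB A hA
  · rw [← hrecover A hA, ← hrecover A' hA']
    exact congrArg (· \ T) h
end

-- The ascription `(s : Set V)` in `inducedCopies` makes its filter run over the image of
-- `S.powerset` in `Finset (Set V)`, not over `S.powerset` itself.
open Classical in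
theorem inducedCopies_eq_card_filter_powerset {V W : Type*} [Fintype V] [DecidableEq V]
    (G : SimpleGraph V) (H : SimpleGraph W) (S : Finset V) :
    inducedCopies G H S =
      (S.powerset.filter fun s : Finset V => Nonempty (G.induce (s : Set V) ≃g H)).card := by
  rw [inducedCopies, bind_pure_comp, fmap_def, filter_image]
  exact card_image_of_injective _ coe_injective

theorem card_eq_of_induce_iso {V W : Type*} [Fintype W] {G : SimpleGraph V} {H : SimpleGraph W}
    {s : Finset V} (e : G.induce (s : Set V) ≃g H) : #s = Fintype.card W := by
  simpa using Fintype.card_congr e.toEquiv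

theorem one_half_pow_le_div_two_pow {w n N : ℕ} (hwn : w ≤ n) (hN : 2 ^ (n - w) ≤ N) :
    ((1 : ℝ) / 2) ^ w ≤ N / 2 ^ n := by
  rw [le_div_iff₀ (by positivity), one_div_pow, one_div_mul_eq_div, div_eq_mul_inv,
    ← pow_sub₀ _ two_ne_zero hwn]
  exact_mod_cast hN

theorem sampling_lemma {V W : Type*} [Fintype V] [DecidableEq V] [Fintype W]
    (q : ℕ) (hq : 2 ≤ q) (G : SimpleGraph V) (H : SimpleGraph W)
    (hcopy : inducedCopies G H Finset.univ ≠ 0) :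
    ((1 : ℝ) / 2) ^ Fintype.card W ≤
      (((Finset.univ : Finset (Finset V)).filter
          fun S => ¬ (q ∣ inducedCopies G H S)).card : ℝ) / 2 ^ Fintype.card V := by
  classical
  set P : Finset V → Prop := fun s => Nonempty (G.induce (s : Set V) ≃g H)
  obtain ⟨T, -, ⟨eT⟩⟩ : ∃ T ∈ univ.powerset, P T := by
    simpa [inducedCopies_eq_card_filter_powerset, filter_nonempty_iff] using hcopy
  have hT : #T = Fintype.card W := card_eq_of_induce_iso eT
  have hmax : ∀ s, P s → T ⊆ s → s = T := fun s ⟨e⟩ hTs =>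
    (eq_of_subset_of_card_le hTs (by rw [card_eq_of_induce_iso e, hT])).symm
  have hcount := two_pow_card_sub_le_card_filter_not_dvd P ⟨eT⟩ hmax (by omega : q ≠ 1)
  simp only [P, ← inducedCopies_eq_card_filter_powerset, hT] at hcount
  exact one_half_pow_le_div_two_pow (hT ▸ card_le_univ T) hcount
end

section
/- For every integer k ≥ 3 with k ≠ 14, there exists an integer s with ⌈(k−1)/2⌉ ≤ s ≤ k−1−⌊(k−1)/3⌋ such that s+1 is prime. -/
/-!
Chebyshev's method, with the weights of his 1852 memoir. Let
`N(m) = m! ⌊m/30⌋! / (⌊m/2⌋! ⌊m/3⌋! ⌊m/5⌋!)`. By Legendre's formula the exponent of a prime `p`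
in `N(m)` is `∑ᵢ w(⌊m/pⁱ⌋)` with `w(x) = x + ⌊x/30⌋ - ⌊x/2⌋ - ⌊x/3⌋ - ⌊x/5⌋`, and `w` takes only
the values 0 and 1, being 1 on `[1, 6)`. So `N(m)` is an integer dividing `lcm(1, …, m)` and
divisible by every prime in `(m/6, m]`. Comparing `N(m + 30)` with `N(m)` shows that, up to
polynomial factors, `2^(39m/30) ≤ N(m) ≤ 2^(40m/30)`. Iterating the upper bound along
`m, m/6, m/36, …` gives `primorial m ≤ 2^(8m/5)` up to such factors, while the lower bound and
`lcm(1, …, m) ≤ primorial m · m^√m` give `primorial m ≥ 2^(39m/30) / m^√m`. Since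
`(39/30)(4/3) > 8/5`, `primorial (4n/3) ≠ primorial n` for `n ≥ 3.5 · 10⁶`, so some prime lies in
`(n, 4n/3]`; with `n = ⌊k/2⌋` this settles `k ≥ 7 · 10⁶`. Smaller `k` are covered by explicit
chains of primes, each less than `4/3` times its predecessor (up to rounding); `k = 14` falls
between the primes 7 and 11.
-/

open Finset Nat Chebyshev

def chebyshevNum (m : ℕ) : ℕ := m ! * (m / 30)!

def chebyshevDen (m : ℕ) : ℕ := (m / 2)! * (m / 3)! * (m / 5)!

def chebyshevQuot (m : ℕ) : ℕ := chebyshevNum m / chebyshevDen m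

def chebyshevWeight (n : ℕ) : ℕ := n + n / 30 - (n / 2 + n / 3 + n / 5)

lemma div_two_add_div_three_add_div_five_le (n : ℕ) : n / 2 + n / 3 + n / 5 ≤ n + n / 30 := by
  omega

lemma chebyshevWeight_le_one (n : ℕ) : chebyshevWeight n ≤ 1 := by
  unfold chebyshevWeight; omega

lemma chebyshevWeight_eq_one {n : ℕ} (h1 : 1 ≤ n) (h6 : n < 6) : chebyshevWeight n = 1 := by
  unfold chebyshevWeight; omega

lemma div_div_swap (m a b : ℕ) : m / a / b = m / b / a := by
  rw [Nat.div_div_eq_div_mul, Nat.div_div_eq_div_mul, Nat.mul_comm]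

lemma chebyshevNum_pos (m : ℕ) : 0 < chebyshevNum m := by unfold chebyshevNum; positivity

lemma chebyshevDen_pos (m : ℕ) : 0 < chebyshevDen m := by unfold chebyshevDen; positivity

lemma factorization_chebyshevNum {p m b : ℕ} (hp : p.Prime) (hb : Nat.log p m < b) :
    (chebyshevNum m).factorization p = ∑ i ∈ Ico 1 b, (m / p ^ i + m / p ^ i / 30) := by
  have h30 : Nat.log p (m / 30) < b := (Nat.log_mono_right (Nat.div_le_self _ _)).trans_lt hb
  simp only [chebyshevNum, Nat.factorization_mul (factorial_ne_zero _) (factorial_ne_zero _),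
    Finsupp.add_apply, factorization_factorial hp hb, factorization_factorial hp h30,
    sum_add_distrib, div_div_swap m 30]

lemma factorization_chebyshevDen {p m b : ℕ} (hp : p.Prime) (hb : Nat.log p m < b) :
    (chebyshevDen m).factorization p =
      ∑ i ∈ Ico 1 b, (m / p ^ i / 2 + m / p ^ i / 3 + m / p ^ i / 5) := by
  have hlt (d : ℕ) : Nat.log p (m / d) < b :=
    (Nat.log_mono_right (Nat.div_le_self _ _)).trans_lt hb
  simp only [chebyshevDen, Nat.factorization_mul (mul_ne_zero (factorial_ne_zero _)
    (factorial_ne_zero _)) (factorial_ne_zero _),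
    Nat.factorization_mul (factorial_ne_zero _) (factorial_ne_zero _), Finsupp.add_apply,
    factorization_factorial hp (hlt _), sum_add_distrib, div_div_swap m _ (p ^ _)]

lemma chebyshevDen_dvd_chebyshevNum (m : ℕ) : chebyshevDen m ∣ chebyshevNum m := by
  rw [← factorization_prime_le_iff_dvd (chebyshevDen_pos m).ne' (chebyshevNum_pos m).ne']
  intro p hp
  rw [factorization_chebyshevNum hp (lt_add_one _), factorization_chebyshevDen hp (lt_add_one _)]
  exact sum_le_sum fun i _ ↦ div_two_add_div_three_add_div_five_le _

lemma chebyshevQuot_mul_chebyshevDen (m : ℕ) :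
    chebyshevQuot m * chebyshevDen m = chebyshevNum m :=
  Nat.div_mul_cancel (chebyshevDen_dvd_chebyshevNum m)

lemma chebyshevQuot_pos (m : ℕ) : 0 < chebyshevQuot m :=
  Nat.div_pos (Nat.le_of_dvd (chebyshevNum_pos m) (chebyshevDen_dvd_chebyshevNum m))
    (chebyshevDen_pos m)

lemma factorization_chebyshevQuot {p : ℕ} (hp : p.Prime) (m : ℕ) :
    (chebyshevQuot m).factorization p =
      ∑ i ∈ Ico 1 (Nat.log p m + 1), chebyshevWeight (m / p ^ i) := by
  rw [chebyshevQuot, factorization_div (chebyshevDen_dvd_chebyshevNum m), Finsupp.tsub_apply,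
    factorization_chebyshevNum hp (lt_add_one _), factorization_chebyshevDen hp (lt_add_one _),
    ← sum_tsub_distrib _ fun i _ ↦ div_two_add_div_three_add_div_five_le _]
  rfl

lemma chebyshevQuot_dvd_lcmUpto (m : ℕ) : chebyshevQuot m ∣ Nat.lcmUpto m := by
  rw [← factorization_prime_le_iff_dvd (chebyshevQuot_pos m).ne' (Nat.lcmUpto_ne_zero m)]
  intro p hp
  rw [factorization_chebyshevQuot hp, Nat.factorization_lcmUpto m hp]
  calc ∑ i ∈ Ico 1 (Nat.log p m + 1), chebyshevWeight (m / p ^ i)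
      ≤ ∑ i ∈ Ico 1 (Nat.log p m + 1), 1 := sum_le_sum fun i _ ↦ chebyshevWeight_le_one _
    _ = Nat.log p m := by simp

lemma prime_dvd_chebyshevQuot {p m : ℕ} (hp : p.Prime) (hpm : p ≤ m) (hm : m < 6 * p) :
    p ∣ chebyshevQuot m := by
  rw [hp.dvd_iff_one_le_factorization (chebyshevQuot_pos m).ne', factorization_chebyshevQuot hp]
  have hlog : 1 ≤ Nat.log p m := Nat.le_log_of_pow_le hp.one_lt (by simpa using hpm)
  calc 1 = chebyshevWeight (m / p ^ 1) := by
        rw [pow_one, chebyshevWeight_eq_one ((Nat.one_le_div_iff hp.pos).2 hpm)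
          (Nat.div_lt_of_lt_mul (by linarith))]
    _ ≤ _ := single_le_sum (f := fun i ↦ chebyshevWeight (m / p ^ i)) (fun i _ ↦ Nat.zero_le _)
        (mem_Ico.2 ⟨le_rfl, by omega⟩)

theorem lcmUpto_le_primorial_mul_pow_sqrt (m : ℕ) :
    Nat.lcmUpto m ≤ primorial m * m ^ sqrt m := by
  rcases eq_or_ne m 0 with rfl | hm
  · decide
  rw [Nat.lcmUpto_eq_prod_pow_log, ← prod_filter_mul_prod_filter_not (primesLE m) (· ≤ sqrt m),
    mul_comm (primorial m)]
  gcongr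
  · calc ∏ p ∈ primesLE m with p ≤ sqrt m, p ^ Nat.log p m
        ≤ ∏ p ∈ primesLE m with p ≤ sqrt m, m := prod_le_prod' fun p _ ↦ pow_log_le_self p hm
      _ ≤ m ^ sqrt m := by
        rw [prod_const]
        refine Nat.pow_le_pow_right (by omega) ?_
        calc #{p ∈ primesLE m | p ≤ sqrt m} ≤ #(Icc 1 (sqrt m)) := card_le_card fun p hp ↦ by
              simp only [mem_filter, mem_primesLE] at hp
              exact mem_Icc.2 ⟨hp.1.2.one_le, hp.2⟩
          _ = sqrt m := by simp
  · calc ∏ p ∈ primesLE m with ¬p ≤ sqrt m, p ^ Nat.log p m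
        ≤ ∏ p ∈ primesLE m with ¬p ≤ sqrt m, p := prod_le_prod' fun p hp ↦ by
          simp only [mem_filter, mem_primesLE, not_le, sqrt_lt'] at hp
          have : Nat.log p m < 2 := (Nat.log_lt_iff_lt_pow hp.1.2.one_lt hm).2 hp.2
          calc p ^ Nat.log p m ≤ p ^ 1 := Nat.pow_le_pow_right hp.1.2.pos (by omega)
            _ = p := pow_one p
      _ ≤ primorial m := prod_le_prod_of_subset_of_one_le' (filter_subset _ _)
          fun p hp _ ↦ (prime_of_mem_primesLE hp).one_le

theorem primorial_le_chebyshevQuot_mul (m : ℕ) :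
    primorial m ≤ chebyshevQuot m * primorial (m / 6) := by
  obtain ⟨r, hr⟩ : ∃ r, m = m / 6 + r := ⟨m - m / 6, by omega⟩
  have hdvd : ∏ p ∈ Ico (m / 6 + 1) (m / 6 + r + 1) with p.Prime, p ∣ chebyshevQuot m :=
    prod_primes_dvd _ (fun p hp ↦ (mem_filter.1 hp).2.prime) fun p hp ↦ by
      simp only [mem_filter, mem_Ico] at hp
      exact prime_dvd_chebyshevQuot hp.2 (by omega) (by omega)
  conv_lhs => rw [hr, primorial_add, mul_comm]
  exact Nat.mul_le_mul_right _ (Nat.le_of_dvd (chebyshevQuot_pos m) hdvd)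

lemma succ_pow_le_pow_mul_ascFactorial (m d t : ℕ) (hd : 0 < d) :
    (m + 1) ^ t ≤ d ^ t * (m / d + 1).ascFactorial t :=
  calc (m + 1) ^ t ≤ (d * (m / d + 1)) ^ t :=
        Nat.pow_le_pow_left (Nat.lt_mul_div_succ m hd) t
    _ = d ^ t * (m / d + 1) ^ t := mul_pow _ _ _
    _ ≤ d ^ t * (m / d + 1).ascFactorial t :=
        Nat.mul_le_mul_left _ (pow_succ_le_ascFactorial _ _)

lemma pow_mul_ascFactorial_le (m d t : ℕ) :
    d ^ t * (m / d + 1).ascFactorial t ≤ (m + d * t) ^ t :=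
  calc d ^ t * (m / d + 1).ascFactorial t ≤ d ^ t * (m / d + t) ^ t :=
        Nat.mul_le_mul_left _ (ascFactorial_le_pow_add _ _)
    _ = (d * (m / d) + d * t) ^ t := by rw [← mul_pow, mul_add]
    _ ≤ (m + d * t) ^ t := Nat.pow_le_pow_left (by have := Nat.mul_div_le m d; omega) t

def chebyshevNumStep (m : ℕ) : ℕ := (m + 1).ascFactorial 30 * (30 * (m / 30 + 1))

def chebyshevDenStep (m : ℕ) : ℕ :=
  2 ^ 15 * (m / 2 + 1).ascFactorial 15 * (3 ^ 10 * (m / 3 + 1).ascFactorial 10) *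
    (5 ^ 6 * (m / 5 + 1).ascFactorial 6)

lemma succ_pow_le_chebyshevNumStep (m : ℕ) : (m + 1) ^ 31 ≤ chebyshevNumStep m := by
  have h1 := succ_pow_le_pow_mul_ascFactorial m 1 30 one_pos
  simp only [one_pow, one_mul, Nat.div_one] at h1
  calc (m + 1) ^ 31 = (m + 1) ^ 30 * (m + 1) := pow_succ _ _
    _ ≤ chebyshevNumStep m := Nat.mul_le_mul h1 (by omega)

lemma chebyshevNumStep_le (m : ℕ) : chebyshevNumStep m ≤ (m + 30) ^ 31 := by
  have h1 := pow_mul_ascFactorial_le m 1 30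
  simp only [one_pow, one_mul, Nat.div_one] at h1
  calc chebyshevNumStep m ≤ (m + 30) ^ 30 * (m + 30) := Nat.mul_le_mul h1 (by omega)
    _ = (m + 30) ^ 31 := (pow_succ _ _).symm

lemma succ_pow_le_chebyshevDenStep (m : ℕ) : (m + 1) ^ 31 ≤ chebyshevDenStep m :=
  calc (m + 1) ^ 31 = (m + 1) ^ 15 * (m + 1) ^ 10 * (m + 1) ^ 6 := by ring
    _ ≤ chebyshevDenStep m := Nat.mul_le_mul (Nat.mul_le_mul
        (succ_pow_le_pow_mul_ascFactorial m 2 15 (by norm_num))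
        (succ_pow_le_pow_mul_ascFactorial m 3 10 (by norm_num)))
        (succ_pow_le_pow_mul_ascFactorial m 5 6 (by norm_num))

lemma chebyshevDenStep_le (m : ℕ) : chebyshevDenStep m ≤ (m + 30) ^ 31 :=
  calc chebyshevDenStep m ≤ (m + 2 * 15) ^ 15 * (m + 3 * 10) ^ 10 * (m + 5 * 6) ^ 6 :=
        Nat.mul_le_mul (Nat.mul_le_mul (pow_mul_ascFactorial_le m 2 15)
          (pow_mul_ascFactorial_le m 3 10)) (pow_mul_ascFactorial_le m 5 6)
    _ = (m + 30) ^ 31 := by ring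

lemma chebyshevNum_add_thirty (m : ℕ) :
    30 * chebyshevNum (m + 30) = chebyshevNum m * chebyshevNumStep m := by
  rw [chebyshevNum, chebyshevNum, chebyshevNumStep, show (m + 30) / 30 = m / 30 + 1 by omega,
    ← factorial_mul_ascFactorial, factorial_succ]
  ring

lemma chebyshevDen_add_thirty (m : ℕ) :
    2 ^ 15 * 3 ^ 10 * 5 ^ 6 * chebyshevDen (m + 30) = chebyshevDen m * chebyshevDenStep m := by
  rw [chebyshevDen, chebyshevDen, chebyshevDenStep, show (m + 30) / 2 = m / 2 + 15 by omega,
    show (m + 30) / 3 = m / 3 + 10 by omega, show (m + 30) / 5 = m / 5 + 6 by omega,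
    ← factorial_mul_ascFactorial, ← factorial_mul_ascFactorial, ← factorial_mul_ascFactorial]
  ring

/- Both step factors lie between `(m + 1) ^ 31` and `(m + 30) ^ 31`, and the constant
`2 ^ 14 * 3 ^ 9 * 5 ^ 5 = 2 ^ 15 * 3 ^ 10 * 5 ^ 6 / 30` lies between `2 ^ 39` and `2 ^ 40`. -/
lemma chebyshevQuot_add_thirty_mul (m : ℕ) :
    chebyshevQuot (m + 30) * chebyshevDenStep m =
      2 ^ 14 * 3 ^ 9 * 5 ^ 5 * (chebyshevQuot m * chebyshevNumStep m) := by
  refine Nat.eq_of_mul_eq_mul_right (chebyshevDen_pos m) ?_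
  calc chebyshevQuot (m + 30) * chebyshevDenStep m * chebyshevDen m
      = chebyshevQuot (m + 30) * (2 ^ 15 * 3 ^ 10 * 5 ^ 6 * chebyshevDen (m + 30)) := by
        rw [chebyshevDen_add_thirty]; ring
    _ = 2 ^ 14 * 3 ^ 9 * 5 ^ 5 * (30 * chebyshevNum (m + 30)) := by
        rw [← chebyshevQuot_mul_chebyshevDen]; ring
    _ = _ := by rw [chebyshevNum_add_thirty, ← chebyshevQuot_mul_chebyshevDen]; ring

lemma two_pow_mul_chebyshevQuot_le (m : ℕ) :
    2 ^ 39 * (chebyshevQuot m * (m + 1) ^ 31) ≤ chebyshevQuot (m + 30) * (m + 30) ^ 31 :=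
  calc 2 ^ 39 * (chebyshevQuot m * (m + 1) ^ 31)
      ≤ (2 ^ 14 * 3 ^ 9 * 5 ^ 5) * (chebyshevQuot m * chebyshevNumStep m) :=
        Nat.mul_le_mul (by norm_num) (Nat.mul_le_mul_left _ (succ_pow_le_chebyshevNumStep m))
    _ = chebyshevQuot (m + 30) * chebyshevDenStep m := (chebyshevQuot_add_thirty_mul m).symm
    _ ≤ chebyshevQuot (m + 30) * (m + 30) ^ 31 := Nat.mul_le_mul_left _ (chebyshevDenStep_le m)

lemma chebyshevQuot_add_thirty_mul_le (m : ℕ) :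
    chebyshevQuot (m + 30) * (m + 1) ^ 31 ≤ 2 ^ 40 * (chebyshevQuot m * (m + 30) ^ 31) :=
  calc chebyshevQuot (m + 30) * (m + 1) ^ 31 ≤ chebyshevQuot (m + 30) * chebyshevDenStep m :=
        Nat.mul_le_mul_left _ (succ_pow_le_chebyshevDenStep m)
    _ = (2 ^ 14 * 3 ^ 9 * 5 ^ 5) * (chebyshevQuot m * chebyshevNumStep m) :=
        chebyshevQuot_add_thirty_mul m
    _ ≤ 2 ^ 40 * (chebyshevQuot m * (m + 30) ^ 31) :=
        Nat.mul_le_mul (by norm_num) (Nat.mul_le_mul_left _ (chebyshevNumStep_le m))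

theorem two_pow_le_chebyshevQuot_mul (m : ℕ) :
    (2 ^ 39) ^ (m / 30) ≤ chebyshevQuot m * (m + 1) ^ 31 := by
  induction m using Nat.strong_induction_on with
  | _ m ih =>
    rcases lt_or_ge m 30 with hm | hm
    · rw [Nat.div_eq_of_lt hm, pow_zero]
      exact Nat.mul_pos (chebyshevQuot_pos m) (by positivity)
    obtain ⟨m, rfl⟩ := Nat.exists_eq_add_of_le' hm
    calc (2 ^ 39) ^ ((m + 30) / 30) = 2 ^ 39 * (2 ^ 39) ^ (m / 30) := by
          rw [show (m + 30) / 30 = m / 30 + 1 by omega, pow_succ']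
      _ ≤ 2 ^ 39 * (chebyshevQuot m * (m + 1) ^ 31) := Nat.mul_le_mul_left _ (ih m (by omega))
      _ ≤ chebyshevQuot (m + 30) * (m + 30) ^ 31 := two_pow_mul_chebyshevQuot_le m
      _ ≤ chebyshevQuot (m + 30) * (m + 30 + 1) ^ 31 :=
          Nat.mul_le_mul_left _ (Nat.pow_le_pow_left (le_add_right le_rfl) 31)

theorem chebyshevQuot_le (m : ℕ) :
    chebyshevQuot m ≤ 2 ^ 104 * (2 ^ 40) ^ (m / 30) * (m + 1) ^ 31 := by
  induction m using Nat.strong_induction_on with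
  | _ m ih =>
    rcases lt_or_ge m 30 with hm | hm
    · rw [Nat.div_eq_of_lt hm, pow_zero, mul_one]
      calc chebyshevQuot m ≤ chebyshevNum m := Nat.div_le_self _ _
        _ ≤ 29 ! := by
          rw [chebyshevNum, Nat.div_eq_of_lt hm, factorial_zero, mul_one]
          exact factorial_le (by omega)
        _ ≤ 2 ^ 104 := by norm_num [factorial]
        _ ≤ 2 ^ 104 * (m + 1) ^ 31 := Nat.le_mul_of_pos_right _ (by positivity)
    obtain ⟨m, rfl⟩ := Nat.exists_eq_add_of_le' hm
    refine Nat.le_of_mul_le_mul_right ?_ (by positivity : 0 < (m + 1) ^ 31)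
    calc chebyshevQuot (m + 30) * (m + 1) ^ 31 ≤ 2 ^ 40 * (chebyshevQuot m * (m + 30) ^ 31) :=
          chebyshevQuot_add_thirty_mul_le m
      _ ≤ 2 ^ 40 * (2 ^ 104 * (2 ^ 40) ^ (m / 30) * (m + 1) ^ 31 * (m + 30) ^ 31) :=
          Nat.mul_le_mul_left _ (Nat.mul_le_mul_right _ (ih m (by omega)))
      _ = 2 ^ 104 * (2 ^ 40) ^ ((m + 30) / 30) * (m + 30) ^ 31 * (m + 1) ^ 31 := by
          rw [show (m + 30) / 30 = m / 30 + 1 by omega, pow_succ]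
          generalize (m + 1) ^ 31 = x
          generalize (m + 30) ^ 31 = y
          ring
      _ ≤ 2 ^ 104 * (2 ^ 40) ^ ((m + 30) / 30) * (m + 30 + 1) ^ 31 * (m + 1) ^ 31 :=
          Nat.mul_le_mul_right _ (Nat.mul_le_mul_left _
            (Nat.pow_le_pow_left (le_add_right le_rfl) 31))

theorem primorial_le (m : ℕ) :
    primorial m ≤ 2 ^ (8 * m / 5) * (2 ^ 104 * (m + 1) ^ 31) ^ (Nat.log 6 m + 1) := by
  induction m using Nat.strong_induction_on with
  | _ m ih =>
    rcases lt_or_ge m 6 with hm | hm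
    · calc primorial m ≤ 4 ^ m := primorial_le_four_pow m
        _ ≤ 4 ^ 52 := Nat.pow_le_pow_right (by norm_num) (by omega)
        _ = 2 ^ 104 := by norm_num
        _ ≤ 2 ^ 104 * (m + 1) ^ 31 := Nat.le_mul_of_pos_right _ (by positivity)
        _ ≤ (2 ^ 104 * (m + 1) ^ 31) ^ (Nat.log 6 m + 1) := Nat.le_self_pow (by omega) _
        _ ≤ _ := Nat.le_mul_of_pos_left _ (by positivity)
    have hlog : Nat.log 6 (m / 6) + 1 = Nat.log 6 m := by
      rw [Nat.log_div_base]
      have : 1 ≤ Nat.log 6 m := Nat.le_log_of_pow_le (by norm_num) (by simpa using hm)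
      omega
    have hexp : 2 ^ (40 * (m / 30)) * 2 ^ (8 * (m / 6) / 5) ≤ 2 ^ (8 * m / 5) := by
      rw [← pow_add]; exact Nat.pow_le_pow_right two_pos (by omega)
    calc primorial m ≤ chebyshevQuot m * primorial (m / 6) := primorial_le_chebyshevQuot_mul m
      _ ≤ 2 ^ 104 * (2 ^ 40) ^ (m / 30) * (m + 1) ^ 31 *
          (2 ^ (8 * (m / 6) / 5) * (2 ^ 104 * (m / 6 + 1) ^ 31) ^ Nat.log 6 m) := by
        rw [← hlog]; exact Nat.mul_le_mul (chebyshevQuot_le m) (ih _ (by omega))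
      _ ≤ 2 ^ 104 * (2 ^ 40) ^ (m / 30) * (m + 1) ^ 31 *
          (2 ^ (8 * (m / 6) / 5) * (2 ^ 104 * (m + 1) ^ 31) ^ Nat.log 6 m) := by
        gcongr; omega
      _ = 2 ^ (40 * (m / 30)) * 2 ^ (8 * (m / 6) / 5) *
          (2 ^ 104 * (m + 1) ^ 31) ^ (Nat.log 6 m + 1) := by
        rw [pow_mul]
        generalize (m + 1) ^ 31 = x
        ring
      _ ≤ 2 ^ (8 * m / 5) * (2 ^ 104 * (m + 1) ^ 31) ^ (Nat.log 6 m + 1) :=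
        Nat.mul_le_mul_right _ hexp

theorem two_pow_le_primorial_mul (m : ℕ) :
    (2 ^ 39) ^ (m / 30) ≤ primorial m * m ^ sqrt m * (m + 1) ^ 31 :=
  calc (2 ^ 39) ^ (m / 30) ≤ chebyshevQuot m * (m + 1) ^ 31 := two_pow_le_chebyshevQuot_mul m
    _ ≤ Nat.lcmUpto m * (m + 1) ^ 31 := Nat.mul_le_mul_right _
        (Nat.le_of_dvd (Nat.lcmUpto_pos m) (chebyshevQuot_dvd_lcmUpto m))
    _ ≤ primorial m * m ^ sqrt m * (m + 1) ^ 31 :=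
        Nat.mul_le_mul_right _ (lcmUpto_le_primorial_mul_pow_sqrt m)

lemma mul_sq_le_two_pow {L : ℕ} (hL : 22 ≤ L) : 3600 * (L + 1) ^ 2 ≤ 2 ^ L := by
  induction L, hL using Nat.le_induction with
  | base => norm_num
  | succ L hL ih =>
    calc 3600 * (L + 1 + 1) ^ 2 ≤ 2 * (3600 * (L + 1) ^ 2) := by nlinarith
      _ ≤ 2 ^ (L + 1) := by rw [pow_succ 2 L]; omega

lemma exponent_lt_of_large {n : ℕ} (hn : 3500000 ≤ n) :
    8 * n / 5 + (Nat.log 6 n + 1) * (104 + 31 * (Nat.log 2 (4 * n / 3) + 1)) +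
      (sqrt (4 * n / 3) + 31) * (Nat.log 2 (4 * n / 3) + 1) < 39 * (4 * n / 3 / 30) := by
  set z := 4 * n / 3 with hz
  set L := Nat.log 2 z
  set K := Nat.log 6 n
  set s := sqrt z
  have hL : 22 ≤ L := Nat.le_log_of_pow_le one_lt_two (by norm_num; omega)
  have hzL : 3600 * (L + 1) ^ 2 ≤ z :=
    (mul_sq_le_two_pow hL).trans (Nat.pow_log_le_self 2 (by omega))
  have hs : 60 * (L + 1) ≤ s := Nat.le_sqrt'.2 (by nlinarith)
  have hsz : 60 * (s * (L + 1)) ≤ z :=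
    calc 60 * (s * (L + 1)) ≤ s * s := by nlinarith
      _ ≤ z := Nat.sqrt_le z
  have hK : 2 * K ≤ L := by
    refine Nat.le_log_of_pow_le one_lt_two ?_
    calc 2 ^ (2 * K) = 4 ^ K := by rw [pow_mul]; rfl
      _ ≤ 6 ^ K := Nat.pow_le_pow_left (by norm_num) K
      _ ≤ n := Nat.pow_log_le_self 6 (by omega)
      _ ≤ z := by omega
  have hP : 120 * ((K + 1) * (104 + 31 * (L + 1))) ≤ z := by nlinarith
  have hL31 : 120 * (31 * (L + 1)) ≤ z := by nlinarith
  have : (s + 31) * (L + 1) = s * (L + 1) + 31 * (L + 1) := by ring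
  omega

lemma primorial_upper_bound_lt_lower_bound {n : ℕ} (hn : 3500000 ≤ n) :
    2 ^ (8 * n / 5) * (2 ^ 104 * (n + 1) ^ 31) ^ (Nat.log 6 n + 1) *
      (4 * n / 3) ^ sqrt (4 * n / 3) * (4 * n / 3 + 1) ^ 31 < (2 ^ 39) ^ (4 * n / 3 / 30) := by
  set z := 4 * n / 3
  set L := Nat.log 2 z
  have hz : z + 1 ≤ 2 ^ (L + 1) := Nat.lt_pow_succ_log_self one_lt_two z
  calc 2 ^ (8 * n / 5) * (2 ^ 104 * (n + 1) ^ 31) ^ (Nat.log 6 n + 1) * z ^ sqrt z * (z + 1) ^ 31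
      ≤ 2 ^ (8 * n / 5) * (2 ^ 104 * (2 ^ (L + 1)) ^ 31) ^ (Nat.log 6 n + 1) *
          (2 ^ (L + 1)) ^ sqrt z * (2 ^ (L + 1)) ^ 31 := by
        gcongr <;> omega
    _ = 2 ^ (8 * n / 5 + (Nat.log 6 n + 1) * (104 + 31 * (L + 1)) + (sqrt z + 31) * (L + 1)) := by
        simp only [← pow_mul, ← pow_add]; ring_nf
    _ < 2 ^ (39 * (z / 30)) := Nat.pow_lt_pow_right one_lt_two (exponent_lt_of_large hn)
    _ = (2 ^ 39) ^ (z / 30) := pow_mul 2 39 _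

theorem exists_prime_lt_and_three_mul_le_four_mul {n : ℕ} (hn : 3500000 ≤ n) :
    ∃ p, p.Prime ∧ n < p ∧ 3 * p ≤ 4 * n := by
  by_contra! h
  obtain ⟨r, hr⟩ : ∃ r, 4 * n / 3 = n + r := ⟨4 * n / 3 - n, by omega⟩
  have hgap : primorial (4 * n / 3) = primorial n := by
    rw [hr, primorial_add, filter_false_of_mem fun p hp hprime ↦ ?_, prod_empty, mul_one]
    have hpr := mem_Ico.1 hp
    have := h p hprime (by omega)
    omega
  have hlower := two_pow_le_primorial_mul (4 * n / 3)
  rw [hgap] at hlower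
  refine (primorial_upper_bound_lt_lower_bound hn).not_ge (hlower.trans ?_)
  gcongr
  exact primorial_le n

lemma exists_prime_of_isChain (p : ℕ) (l : List ℕ) (hprime : ∀ q ∈ p :: l, q.Prime)
    (hchain : (p :: l).IsChain (fun p q ↦ 3 * q ≤ 4 * p + 3)) {k : ℕ} (hlo : 3 * p ≤ 2 * k + 3)
    (hhi : k + 1 ≤ 2 * (p :: l).getLast (List.cons_ne_nil p l)) :
    ∃ q, q.Prime ∧ k + 1 ≤ 2 * q ∧ 3 * q ≤ 2 * k + 3 := by
  induction l generalizing p with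
  | nil => exact ⟨p, hprime p List.mem_cons_self, by simpa using hhi, hlo⟩
  | cons q l ih =>
    by_cases hk : k + 1 ≤ 2 * p
    · exact ⟨p, hprime p List.mem_cons_self, hk, hlo⟩
    rw [List.isChain_cons_cons] at hchain
    exact ih q (fun r hr ↦ hprime r (List.mem_cons_of_mem p hr)) hchain.2 (by omega)
      (by simpa using hhi)

theorem exists_prime_of_small {k : ℕ} (hk : 2 ≤ k) (hk14 : k ≠ 14) (hk' : k < 7000000) :
    ∃ p, p.Prime ∧ k + 1 ≤ 2 * p ∧ 3 * p ≤ 2 * k + 3 := by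
  rcases lt_or_gt_of_ne hk14 with hlt | hgt
  · exact exists_prime_of_isChain 2 [3, 5, 7] (by norm_num) (by decide) (by omega)
      (by simp; omega)
  · exact exists_prime_of_isChain 11 [13, 17, 23, 31, 41, 53, 71, 89, 113, 151, 199, 263, 349,
      463, 617, 823, 1097, 1459, 1933, 2557, 3407, 4523, 6029, 8039, 10711, 14281, 19037, 25373,
      33829, 45083, 60107, 80141, 106853, 142469, 189949, 253247, 337661, 450209, 600269, 800357,
      1067137, 1422833, 1897099, 2529463, 3372601, 4496801] (by norm_num) (by decide) (by omega)
      (by simp; omega)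

theorem exists_prime_in_range (k : ℕ) (hk : 3 ≤ k) (hk14 : k ≠ 14) :
    ∃ s : ℕ, (k - 1 + 1) / 2 ≤ s ∧ s ≤ k - 1 - (k - 1) / 3 ∧ Nat.Prime (s + 1) := by
  obtain ⟨p, hp, hlo, hhi⟩ : ∃ p, p.Prime ∧ k + 1 ≤ 2 * p ∧ 3 * p ≤ 2 * k + 3 := by
    rcases lt_or_ge k 7000000 with hsmall | hlarge
    · exact exists_prime_of_small (by omega) hk14 hsmall
    · obtain ⟨p, hp, hnp, hpn⟩ := exists_prime_lt_and_three_mul_le_four_mul (n := k / 2) (by omega)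
      exact ⟨p, hp, by omega, by omega⟩
  exact ⟨p - 1, by omega, by omega, by rwa [Nat.sub_add_cancel hp.one_le]⟩
end

section
/- Let ω, B, δ, d_i, d_j, d_r be real numbers with 2 ≤ ω ≤ 3, 0 ≤ d_r ≤ δ ≤ d_i ≤ d_j ≤ 1, δ ≤ 1, and B ≥ ω(1−δ). Define M = 3 − d_i − d_j − d_r − (3−ω)(1 − max{d_i, d_j, d_r}). If M ≥ B, then d_r + d_i ≤ ω − B − (ω−2)δ ≤ 2δ, and d_r ≤ ω − B − (ω−2)δ − δ. -/
theorem lowsum_lemma (ω B δ di dj dr : ℝ)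
    (hω2 : 2 ≤ ω) (hω3 : ω ≤ 3)
    (h0 : 0 ≤ dr) (h1 : dr ≤ δ) (h2 : δ ≤ di) (h3 : di ≤ dj) (h4 : dj ≤ 1) (h5 : δ ≤ 1)
    (hB : ω * (1 - δ) ≤ B)
    (hM : B ≤ 3 - di - dj - dr - (3 - ω) * (1 - max (max di dj) dr)) :
    (dr + di ≤ ω - B - (ω - 2) * δ ∧ ω - B - (ω - 2) * δ ≤ 2 * δ) ∧
      dr ≤ ω - B - (ω - 2) * δ - δ := by
  have hmax : max (max di dj) dr = dj := by
    rw [max_eq_right h3, max_eq_left (h1.trans (h2.trans h3))]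
  rw [hmax] at hM
  refine ⟨⟨?_, by nlinarith⟩, ?_⟩ <;> nlinarith [mul_le_mul_of_nonneg_left (h2.trans h3) (by linarith : (0:ℝ) ≤ ω - 2)]
end

section
/- Let k ≥ 2 and let B be a real number. Suppose P : Fin k × Fin k → ℝ satisfies P(R, R+1) ≤ B (indices mod k), P(R−1, R) ≤ B, and for every r with R+1 ≤ r ≤ R−2 (cyclically), P(R, r+1) ≤ B or P(r, R) ≤ B. Then there exists an index r with R+1 ≤ r ≤ R−1 (cyclically) such that both P(R, r) ≤ B and P(r, R) ≤ B. -/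
theorem circle_extremal_index (k : ℕ) (hk : 2 ≤ k) (B : ℝ)
    (R : ZMod k) (P : ZMod k → ZMod k → ℝ)
    (h1 : P R (R + 1) ≤ B) (h2 : P (R - 1) R ≤ B)
    (h3 : ∀ i : ℕ, 1 ≤ i → i ≤ k - 2 → P R (R + (i : ZMod k) + 1) ≤ B ∨ P (R + (i : ZMod k)) R ≤ B) :
    ∃ i : ℕ, 1 ≤ i ∧ i ≤ k - 1 ∧ P R (R + (i : ZMod k)) ≤ B ∧ P (R + (i : ZMod k)) R ≤ B := by
  have hend : ((k - 1 : ℕ) : ZMod k) = -1 := by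
    have : ((k - 1 : ℕ) : ZMod k) = (k : ZMod k) - 1 := by
      push_cast [Nat.cast_sub (by omega : 1 ≤ k)]; ring
    rw [this, ZMod.natCast_self]; ring
  have aux : ∀ d m : ℕ, 1 ≤ m → m ≤ k - 1 → k - 1 - m ≤ d → P R (R + (m : ZMod k)) ≤ B →
      ∃ i : ℕ, 1 ≤ i ∧ i ≤ k - 1 ∧ P R (R + (i : ZMod k)) ≤ B ∧ P (R + (i : ZMod k)) R ≤ B := by
    intro d
    induction d with
    | zero =>
      intro m hm1 hm2 hd hP
      have : m = k - 1 := by omega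
      subst this
      refine ⟨k - 1, by omega, le_refl _, hP, ?_⟩
      rw [hend]
      simpa [sub_eq_add_neg] using h2
    | succ d ih =>
      intro m hm1 hm2 hd hP
      by_cases hm : m = k - 1
      · subst hm
        refine ⟨k - 1, by omega, le_refl _, hP, ?_⟩
        rw [hend]
        simpa [sub_eq_add_neg] using h2
      · have hm2' : m ≤ k - 2 := by omega
        rcases h3 m hm1 hm2' with h | h
        · have := ih (m + 1) (by omega) (by omega) (by omega)
          apply this
          push_cast
          convert h using 2
          ring
        · exact ⟨m, hm1, hm2, hP, h⟩
  apply aux (k - 2) 1 le_rfl (by omega) (by omega)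
  simpa using h1
end

section
/- Let k ≥ 3, δ ≥ 0, and let d : ℤ/kℤ → ℝ≥0. Fix indices R and suppose f(R+1, R−1) := Σ_{r=R+1}^{R+k−1} d_r ≤ 2tδ where t ≥ 1 is an integer. Suppose P : ℤ/kℤ × ℤ/kℤ → ℝ satisfies P(w, y) ≤ 1 + Σ_{r=w+1}^{y−1} d_r for all w ≠ y (cyclic sums). Then there exists an index r such that both P(R, r) ≤ 1 + tδ and P(r, R) ≤ 1 + tδ. -/
theorem circlesum_lemma (k : ℕ) (hk : 3 ≤ k) (t : ℕ) (ht : 1 ≤ t) (δ : ℝ) (hδ : 0 ≤ δ)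
    (d : ZMod k → ℝ) (hd : ∀ r, 0 ≤ d r) (R : ZMod k)
    (hf : ∑ i ∈ Finset.range (k - 1), d (R + 1 + (i : ZMod k)) ≤ 2 * t * δ)
    (P : ZMod k → ZMod k → ℝ)
    (hP : ∀ w y : ZMod k, w ≠ y →
      P w y ≤ 1 + ∑ i ∈ Finset.range ((y - w - 1 : ZMod k)).val, d (w + 1 + (i : ZMod k))) :
    ∃ r : ZMod k, P R r ≤ 1 + t * δ ∧ P r R ≤ 1 + t * δ := by
  classical
  haveI : NeZero k := ⟨by omega⟩
  set T : ℝ := t * δ with hT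
  have hT0 : 0 ≤ T := by positivity
  set g : ℕ → ℝ := fun j => ∑ i ∈ Finset.range j, d (R + 1 + (i : ZMod k)) with hg
  set j := Nat.findGreatest (fun m => g m ≤ T) (k - 2) with hjdef
  have hj0 : g 0 ≤ T := by simp [hg, hT0]
  have hjle : j ≤ k - 2 := Nat.findGreatest_le _
  have hgj : g j ≤ T := by
    have := Nat.findGreatest_spec (P := fun m => g m ≤ T) (Nat.zero_le (k - 2)) hj0
    simpa [hjdef] using this
  set r : ZMod k := R + 1 + ((j : ℕ) : ZMod k) with hr
  have hjk : j < k := by omega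
  have hrR : r ≠ R := by
    intro h
    have h2 : ((j + 1 : ℕ) : ZMod k) = 0 := by
      have : R + 1 + ((j : ℕ) : ZMod k) = R := h
      push_cast
      linear_combination this - (h.symm.trans h).symm + this - this
    have := (ZMod.natCast_eq_zero_iff _ _).mp h2
    have := Nat.le_of_dvd (by omega) this
    omega
  -- first inequality
  have hval1 : ((r - R - 1 : ZMod k)).val = j := by
    have : (r - R - 1 : ZMod k) = ((j : ℕ) : ZMod k) := by rw [hr]; ring
    rw [this, ZMod.val_cast_of_lt hjk]
  have h1 : P R r ≤ 1 + T := by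
    have := hP R r (Ne.symm hrR)
    rw [hval1] at this
    exact this.trans (by linarith)
  -- second inequality
  set m := k - 2 - j with hm
  have hval2 : ((R - r - 1 : ZMod k)).val = m := by
    have key : ((m : ℕ) : ZMod k) = R - r - 1 := by
      have hsum : ((m : ℕ) : ZMod k) + ((j + 2 : ℕ) : ZMod k) = 0 := by
        rw [← Nat.cast_add]
        have : m + (j + 2) = k := by omega
        rw [this, ZMod.natCast_self]
      have : R - r - 1 = -(((j + 2 : ℕ) : ZMod k)) := by
        rw [hr]; push_cast; ring
      rw [this, eq_neg_of_add_eq_zero_left hsum]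
    rw [← key, ZMod.val_cast_of_lt (by omega)]
  have hsplit : g (k - 1) = g (j + 1) + ∑ i ∈ Finset.range m, d (R + 1 + ((j + 1 + i : ℕ) : ZMod k)) := by
    have hk1 : k - 1 = (j + 1) + m := by omega
    simp only [hg, hk1, Finset.sum_range_add]
  have hS2 : ∑ i ∈ Finset.range m, d (r + 1 + (i : ZMod k))
      = g (k - 1) - g (j + 1) := by
    rw [hsplit]
    have : ∀ i ∈ Finset.range m, d (r + 1 + (i : ZMod k)) = d (R + 1 + ((j + 1 + i : ℕ) : ZMod k)) := by
      intro i _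
      congr 1
      rw [hr]; push_cast; ring
    rw [Finset.sum_congr rfl this]
    ring
  have hS2le : ∑ i ∈ Finset.range m, d (r + 1 + (i : ZMod k)) ≤ T := by
    rcases eq_or_lt_of_le hjle with heq | hlt
    · have hm0 : m = 0 := by omega
      simp [hm0, hT0]
    · have hgt : ¬ g (j + 1) ≤ T := by
        apply Nat.findGreatest_is_greatest (P := fun m => g m ≤ T) (k := j + 1) (n := k - 2)
        · rw [← hjdef]; omega
        · omega
      push_neg at hgt
      rw [hS2]
      have : g (k - 1) ≤ 2 * T := by rw [hT]; calc g (k-1) ≤ 2 * t * δ := hf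
                                                _ = 2 * (t * δ) := by ring
      linarith
  have h2 : P r R ≤ 1 + T := by
    have := hP r R hrR
    rw [hval2] at this
    linarith
  exact ⟨r, h1, h2⟩
end

section
/- Let G be a finite simple graph on vertex set V, let H be a finite simple graph with a t-clique subgraph on vertices K ⊆ V(H), and let H' = H − K. Construct G' with vertex set (⋃_{i∈K} V_i) ∪ V(H'), where each V_i is a copy of V, edges between copies in different parts V_i, V_j mirror edges of G, each vertex h of H' is joined to all of V_i whenever h is adjacent to i in H, and edges within H' are as in H. If G contains a t-clique, then G' contains a (not necessarily induced) subgraph isomorphic to H. -/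
/-!
Any homomorphism `φ` from `H[K]` to `G` suffices: send `i ∈ K` to `(i, φ i) ∈ V_i` and every other
vertex of `H` to itself. The first coordinate records `i`, so this is injective even when `φ` is
not; an edge `ij` inside `K` goes to the edge `(i, φ i)(j, φ j)` of `G'`, and all other edges of
`H` are copied verbatim. A bijection from `K` onto a `t`-clique of `G` is such a homomorphism.
-/

/-- The reduction graph `G'`: one copy `V_i` of the vertex set of `G` for each clique vertex
`i ∈ K`, plus the vertices of `H' = H − K`. Edges between copies mirror `G`, a vertex `h ∉ K`
is joined to all of `V_i` whenever `h` is adjacent to `i` in `H`, and edges among the vertices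
outside `K` are as in `H`. -/
def reductionGraph {V α : Type*} (G : SimpleGraph V) (H : SimpleGraph α) (K : Set α) :
    SimpleGraph ((K × V) ⊕ {a : α // a ∉ K}) where
  Adj x y :=
    match x, y with
    | .inl (i, u), .inl (j, v) => H.Adj i j ∧ G.Adj u v
    | .inl (i, _), .inr h => H.Adj (h : α) i
    | .inr h, .inl (i, _) => H.Adj (h : α) i
    | .inr h, .inr h' => H.Adj (h : α) h'
  symm := by
    constructor
    rintro (⟨i, u⟩ | h) (⟨j, v⟩ | h') hadj
    · exact ⟨hadj.1.symm, hadj.2.symm⟩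
    · exact hadj
    · exact hadj
    · exact hadj.symm
  loopless := by
    constructor
    rintro (⟨i, u⟩ | h) hadj
    · exact H.irrefl hadj.1
    · exact H.irrefl hadj

open SimpleGraph

def SimpleGraph.IsClique.homOfEmbedding {V W : Type*} {G : SimpleGraph V} {s : Set V}
    (hs : G.IsClique s) (A : SimpleGraph W) (f : W ↪ s) : A →g G where
  toFun w := f w
  map_rel' hadj := hs (f _).2 (f _).2 (Subtype.coe_injective.ne (f.injective.ne hadj.ne))

namespace reductionGraph

variable {V α : Type*} {G : SimpleGraph V} {H : SimpleGraph α} {K : Set α}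
  [DecidablePred (· ∈ K)]

def lift (φ : H.induce K →g G) (a : α) : (K × V) ⊕ {a : α // a ∉ K} :=
  if h : a ∈ K then .inl (⟨a, h⟩, φ ⟨a, h⟩) else .inr ⟨a, h⟩

theorem lift_injective (φ : H.induce K →g G) : Function.Injective (lift φ) := by
  intro a b hab
  by_cases ha : a ∈ K <;> by_cases hb : b ∈ K <;> simp_all [lift]

theorem lift_adj (φ : H.induce K →g G) {a b : α} (hab : H.Adj a b) :
    (reductionGraph G H K).Adj (lift φ a) (lift φ b) := by
  by_cases ha : a ∈ K <;> by_cases hb : b ∈ K <;> simp only [lift, ha, hb, dite_true, dite_false]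
  · exact ⟨hab, φ.map_adj (by simpa using hab)⟩
  · exact hab.symm
  · exact hab
  · exact hab

def copyOfHom (φ : H.induce K →g G) : Copy H (reductionGraph G H K) :=
  Hom.toCopy ⟨lift φ, lift_adj φ⟩ (lift_injective φ)

end reductionGraph

theorem reduction_forward {V α : Type*} (G : SimpleGraph V) (H : SimpleGraph α)
    (t : ℕ) (K : Finset α) (hK : H.IsNClique t K)
    (sG : Finset V) (hsG : G.IsNClique t sG) :
    ∃ f : α → ({a : α // a ∈ (K : Set α)} × V) ⊕ {a : α // a ∉ (K : Set α)},
      Function.Injective f ∧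
        ∀ a b : α, H.Adj a b → (reductionGraph G H (K : Set α)).Adj (f a) (f b) := by
  classical
  let e : K ≃ sG := Finset.equivOfCardEq (hK.card_eq.trans hsG.card_eq.symm)
  let c := reductionGraph.copyOfHom
    (hsG.isClique.homOfEmbedding (H.induce (K : Set α)) e.toEmbedding)
  exact ⟨c, c.injective, fun _ _ hab => c.toHom.map_adj hab⟩
end
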